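/- Strict bounds for the averaged projection (Lemma 3.4(ii)): For every \(\varphi\in\mathcal{X}_N\), \(0\leq(\mathscr{T}\varphi,\varphi)_+\leq(\varphi,\varphi)_+\), and both inequalities are strict when \(\varphi\neq 0\). -/
import Mathlib


namespace FRD

/-- The unit lattice vector `e j` in the discrete torus `(ZMod n)^d`. -/
def unitVec (d n : ℕ) (j : Fin d) : Fin d → ZMod n := fun i => if i = j then 1 else 0

/-- Discrete forward gradient `(∇φ)^r_j(x) = φ^r(x+e_j) - φ^r(x)`. -/
def dGrad {d m : ℕ} (n : ℕ) (φ : (Fin d → ZMod n) → Fin m → ℝ) (x : Fin d → ZMod n) :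
    Fin m → Fin d → ℝ :=
  fun r j => φ (x + unitVec d n j) r - φ x r

/-- Standard scalar product on `ℝ^{m×d}`. -/
def ginner {d m : ℕ} (F G : Fin m → Fin d → ℝ) : ℝ := ∑ r, ∑ j, F r j * G r j

/-- Action on `ℝ^{m×d}` of the linear map with coefficient array `A`. -/
def appA {d m : ℕ} (A : Fin m × Fin d → Fin m × Fin d → ℝ) (F : Fin m → Fin d → ℝ) :
    Fin m → Fin d → ℝ :=
  fun r j => ∑ p : Fin m × Fin d, A (r, j) p * F p.1 p.2

/-- `ℓ²` scalar product `⟨φ,ψ⟩` on the torus. -/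
def pairV {d m : ℕ} (n : ℕ) [NeZero n] (φ ψ : (Fin d → ZMod n) → Fin m → ℝ) : ℝ :=
  ∑ x, ∑ r, φ x r * ψ x r

/-- `φ` has zero mean (i.e. `φ ∈ 𝒳_N`). -/
def MeanZero {d m : ℕ} (n : ℕ) [NeZero n] (φ : (Fin d → ZMod n) → Fin m → ℝ) : Prop :=
  ∑ x, φ x = 0

/-- Dirichlet form `(φ,ψ)_+ = ∑_x ⟨A ∇φ(x), ∇ψ(x)⟩`. -/
def plusForm {d m : ℕ} (n : ℕ) [NeZero n] (A : Fin m × Fin d → Fin m × Fin d → ℝ)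
    (φ ψ : (Fin d → ZMod n) → Fin m → ℝ) : ℝ :=
  ∑ x, ginner (appA A (dGrad n φ x)) (dGrad n ψ x)

/-- The elliptic operator `𝒜 = ∇* (A ∇·)`. -/
def opA {d m : ℕ} (n : ℕ) (A : Fin m × Fin d → Fin m × Fin d → ℝ)
    (φ : (Fin d → ZMod n) → Fin m → ℝ) : (Fin d → ZMod n) → Fin m → ℝ :=
  fun x r => ∑ j, (appA A (dGrad n φ (x - unitVec d n j)) r j - appA A (dGrad n φ x) r j)

/-- The discrete cube `{a,…,b}^d` viewed inside the torus. -/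
def box (d n a b : ℕ) : Set (Fin d → ZMod n) :=
  {x | ∀ i, ∃ k : ℕ, a ≤ k ∧ k ≤ b ∧ x i = (k : ZMod n)}

/-- Distance to `0` on `ZMod n`, i.e. `min` over integer lifts of the absolute value. -/
def zdist (n : ℕ) (z : ZMod n) : ℕ := min z.val (n - z.val)

/-- The torus metric `ρ_∞`. -/
def distT {d : ℕ} (n : ℕ) (x y : Fin d → ZMod n) : ℕ :=
  Finset.univ.sup fun i => zdist n (x i - y i)

/-- `P` is the `(·,·)_+`-orthogonal projection of `𝒳_N` onto the subspace `𝓗_+(Q+x)` of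
mean-zero functions vanishing outside `Q + x`, where `Q = {1,…,l-1}^d`. -/
def IsProj {d m : ℕ} (n : ℕ) [NeZero n] (A : Fin m × Fin d → Fin m × Fin d → ℝ) (l : ℕ)
    (x : Fin d → ZMod n)
    (P : ((Fin d → ZMod n) → Fin m → ℝ) → (Fin d → ZMod n) → Fin m → ℝ) : Prop :=
  ∀ φ, MeanZero n φ →
    MeanZero n (P φ) ∧ (∀ y, y - x ∉ box d n 1 (l - 1) → P φ y = 0) ∧
    ∀ ψ, MeanZero n ψ → (∀ y, y - x ∉ box d n 1 (l - 1) → ψ y = 0) →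
      plusForm n A (P φ) ψ = plusForm n A φ ψ

/-- The averaged projection `𝒯 = l^{-d} ∑_x Π_x`. -/
noncomputable def Tavg {d m : ℕ} (n : ℕ) [NeZero n] (l : ℕ)
    (P : (Fin d → ZMod n) → ((Fin d → ZMod n) → Fin m → ℝ) → (Fin d → ZMod n) → Fin m → ℝ)
    (φ : (Fin d → ZMod n) → Fin m → ℝ) : (Fin d → ZMod n) → Fin m → ℝ :=
  ((l : ℝ) ^ d)⁻¹ • ∑ x, P x φ

/-- Translation `τ_a φ = φ(· - a)`. -/
def tau {d m : ℕ} (n : ℕ) (a : Fin d → ZMod n) (φ : (Fin d → ZMod n) → Fin m → ℝ) :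
    (Fin d → ZMod n) → Fin m → ℝ := fun y => φ (y - a)

/-- Convolution operator with matrix-valued kernel `K`. -/
def convK {d m : ℕ} (n : ℕ) [NeZero n] (K : (Fin d → ZMod n) → Fin m → Fin m → ℝ)
    (φ : (Fin d → ZMod n) → Fin m → ℝ) : (Fin d → ZMod n) → Fin m → ℝ :=
  fun x r => ∑ y, ∑ s, K (x - y) r s * φ y s

/-- Discrete forward derivative of a matrix-valued kernel. -/
def kDeriv {d m : ℕ} (n : ℕ) (j : Fin d) (K : (Fin d → ZMod n) → Fin m → Fin m → ℝ) :
    (Fin d → ZMod n) → Fin m → Fin m → ℝ :=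
  fun x r s => K (x + unitVec d n j) r s - K x r s

/-- The iterated discrete derivative `∇^α = ∏_i ∇_i^{α_i}` of a matrix-valued kernel. -/
def multiDeriv {d m : ℕ} (n : ℕ) (α : Fin d → ℕ)
    (K : (Fin d → ZMod n) → Fin m → Fin m → ℝ) : (Fin d → ZMod n) → Fin m → Fin m → ℝ :=
  (List.finRange d).foldr (fun j K' => (kDeriv n j)^[α j] K') K

/-- Operator norm of an `m × m` matrix (as operator on Euclidean space). -/
noncomputable def matOpNorm {m : ℕ} (M : Fin m → Fin m → ℝ) : ℝ :=
  ‖Matrix.toEuclideanCLM (𝕜 := ℝ) (Matrix.of M)‖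



/-! ### Auxiliary infrastructure for Lemma 3.4(ii) -/

section Aux34

set_option linter.unusedSectionVars false

/-- cast an `ℕ`-vector into the torus -/
def natv (d n : ℕ) (w : Fin d → ℕ) : Fin d → ZMod n := fun i => (w i : ZMod n)

variable {d m : ℕ} {n : ℕ} [NeZero n]

lemma natv_zero : natv d n (fun _ => 0) = 0 := by funext i; simp [natv]

lemma natv_update (w : Fin d → ℕ) (i0 : Fin d) (h : 1 ≤ w i0) :
    natv d n w = natv d n (Function.update w i0 (w i0 - 1)) + unitVec d n i0 := by
  funext i
  by_cases hi : i = i0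
  · subst hi
    simp only [natv, Pi.add_apply, Function.update_self, unitVec, if_pos rfl]
    have : w i = (w i - 1) + 1 := by omega
    rw [this]; push_cast; ring
  · simp [natv, Pi.add_apply, Function.update_of_ne hi, unitVec, hi]

lemma natv_mem_box (w : Fin d → ℕ) (b : ℕ) (hw : ∀ i, w i ≤ b) :
    natv d n w ∈ box d n 0 b := fun i => ⟨w i, Nat.zero_le _, hw i, rfl⟩

lemma shift_invariant {α : Sort*} (f : (Fin d → ZMod n) → α)
    (h : ∀ y i, f (y + unitVec d n i) = f y) (y : Fin d → ZMod n) (w : Fin d → ℕ) :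
    f (y + natv d n w) = f y := by
  suffices H : ∀ (k : ℕ) (w : Fin d → ℕ), (∑ i, w i) = k → f (y + natv d n w) = f y from
    H _ w rfl
  intro k
  induction k with
  | zero =>
    intro w hw
    have hz : ∀ i, w i = 0 := fun i =>
      (Finset.sum_eq_zero_iff (s := Finset.univ) (f := w)).1 hw i (Finset.mem_univ i)
    rw [funext hz, natv_zero, add_zero]
  | succ k ih =>
    intro w hw
    have hex : ∃ i, 1 ≤ w i := by
      by_contra hc
      push_neg at hc
      have hs : ∑ i, w i = 0 := Finset.sum_eq_zero fun i _ => by have := hc i; omega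
      rw [hw] at hs; omega
    obtain ⟨i0, hi0⟩ := hex
    have hsum : ∑ i, Function.update w i0 (w i0 - 1) i = k := by
      rw [← Finset.add_sum_erase _ _ (Finset.mem_univ i0), Function.update_self]
      have heq : ∑ i ∈ Finset.univ.erase i0, Function.update w i0 (w i0 - 1) i
          = ∑ i ∈ Finset.univ.erase i0, w i :=
        Finset.sum_congr rfl fun i hi => by
          rw [Function.update_of_ne (Finset.ne_of_mem_erase hi)]
      rw [heq]
      rw [← Finset.add_sum_erase _ w (Finset.mem_univ i0)] at hw
      omega
    rw [natv_update w i0 hi0, ← add_assoc, h, ih _ hsum]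

lemma eq_add_natv (y z : Fin d → ZMod n) : z = y + natv d n (fun i => (z i - y i).val) := by
  funext i
  simp [natv, ZMod.natCast_val, ZMod.cast_id]

lemma const_of_unit_steps {α : Sort*} (f : (Fin d → ZMod n) → α)
    (h : ∀ y i, f (y + unitVec d n i) = f y) (y z : Fin d → ZMod n) : f z = f y := by
  rw [eq_add_natv y z, shift_invariant f h]

/-- constancy on a box, from vanishing gradient on the (closed) box -/
lemma box_const {α : Sort*} (b : ℕ) (f : (Fin d → ZMod n) → α) (x : Fin d → ZMod n)
    (h : ∀ y, y - x ∈ box d n 0 b → ∀ i, f (y + unitVec d n i) = f y) :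
    ∀ w : Fin d → ℕ, (∀ i, w i ≤ b) → f (x + natv d n w) = f x := by
  suffices H : ∀ (k : ℕ) (w : Fin d → ℕ), (∑ i, w i) = k → (∀ i, w i ≤ b) →
      f (x + natv d n w) = f x from fun w hw => H _ w rfl hw
  intro k
  induction k with
  | zero =>
    intro w hw _
    have hz : ∀ i, w i = 0 := fun i =>
      (Finset.sum_eq_zero_iff (s := Finset.univ) (f := w)).1 hw i (Finset.mem_univ i)
    rw [funext hz, natv_zero, add_zero]
  | succ k ih =>
    intro w hw hwb
    have hex : ∃ i, 1 ≤ w i := by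
      by_contra hc
      push_neg at hc
      have hs : ∑ i, w i = 0 := Finset.sum_eq_zero fun i _ => by have := hc i; omega
      rw [hw] at hs; omega
    obtain ⟨i0, hi0⟩ := hex
    set w' := Function.update w i0 (w i0 - 1) with hw'
    have hsum : ∑ i, w' i = k := by
      rw [hw', ← Finset.add_sum_erase _ _ (Finset.mem_univ i0), Function.update_self]
      have heq : ∑ i ∈ Finset.univ.erase i0, Function.update w i0 (w i0 - 1) i
          = ∑ i ∈ Finset.univ.erase i0, w i :=
        Finset.sum_congr rfl fun i hi => by
          rw [Function.update_of_ne (Finset.ne_of_mem_erase hi)]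
      rw [heq]
      rw [← Finset.add_sum_erase _ w (Finset.mem_univ i0)] at hw
      omega
    have hwb' : ∀ i, w' i ≤ b := by
      intro i
      by_cases hi : i = i0
      · subst hi; rw [hw', Function.update_self]; have := hwb i; omega
      · rw [hw', Function.update_of_ne hi]; exact hwb i
    have hmem : (x + natv d n w') - x ∈ box d n 0 b := by
      rw [add_sub_cancel_left]
      exact natv_mem_box w' b hwb'
    rw [natv_update w i0 hi0, ← add_assoc, h _ hmem, ih _ hsum hwb']

/-- reach every point of the torus using jumps with all coordinates in `{1,2}` -/
lemma reach12 (P : (Fin d → ZMod n) → Prop)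
    (hstep : ∀ y (c : Fin d → ℕ), (∀ i, 1 ≤ c i ∧ c i ≤ 2) → P y → P (y + natv d n c))
    (x0 : Fin d → ZMod n) (h0 : P x0) : ∀ z, P z := by
  intro z
  set v : Fin d → ℕ := fun i => (z i - x0 i).val with hv
  set w : ℕ → Fin d → ℕ := fun j i => j + min j (v i) with hwdef
  have key : ∀ j, P (x0 + natv d n (w j)) := by
    intro j
    induction j with
    | zero =>
      have : natv d n (w 0) = 0 := by funext i; simp [natv, hwdef]
      rw [this, add_zero]; exact h0
    | succ j ih =>
      have hc : ∀ i, 1 ≤ (w (j+1) i - w j i) ∧ (w (j+1) i - w j i) ≤ 2 := by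
        intro i; simp only [hwdef]; omega
      have hnat : natv d n (w (j+1)) = natv d n (w j) + natv d n (fun i => w (j+1) i - w j i) := by
        funext i
        have hnn : w (j+1) i = w j i + (w (j+1) i - w j i) := by simp only [hwdef]; omega
        have h1 : ((w (j+1) i : ℕ) : ZMod n) = ((w j i + (w (j+1) i - w j i) : ℕ) : ZMod n) :=
          congrArg _ hnn
        simp only [natv, Pi.add_apply]
        rw [h1, Nat.cast_add]
      rw [hnat, ← add_assoc]
      exact hstep _ _ hc ih
  have hfin : x0 + natv d n (w n) = z := by
    funext i
    have hvlt : v i < n := ZMod.val_lt _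
    have hmin : min n (v i) = v i := by omega
    simp only [natv, Pi.add_apply, hwdef, hmin]
    push_cast
    simp [hv, ZMod.natCast_val, ZMod.cast_id, ZMod.natCast_self]
  rw [← hfin]; exact key n

open Classical in
lemma card_box_filter (a b : ℕ) (hab : a ≤ b) (hb : b < n) :
    (Finset.univ.filter (fun z : Fin d → ZMod n => z ∈ box d n a b)).card = (b + 1 - a) ^ d := by
  classical
  have himg : (Finset.univ.filter (fun z : Fin d → ZMod n => z ∈ box d n a b)) =
      Finset.image (fun t : Fin d → Fin (b + 1 - a) => fun i => ((a + (t i : ℕ) : ℕ) : ZMod n))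
        Finset.univ := by
    ext z
    simp only [Finset.mem_filter, Finset.mem_univ, true_and, Finset.mem_image]
    constructor
    · intro hz
      choose k hk1 hk2 hk3 using hz
      refine ⟨fun i => ⟨k i - a, by have := hk1 i; have := hk2 i; omega⟩, ?_⟩
      funext i
      have : a + (k i - a) = k i := by have := hk1 i; omega
      rw [this, ← hk3 i]
    · rintro ⟨t, rfl⟩ i
      exact ⟨a + (t i : ℕ), by omega, by have := (t i).is_lt; omega, rfl⟩
  rw [himg, Finset.card_image_of_injective _ ?_, Finset.card_univ, Fintype.card_fun,
    Fintype.card_fin, Fintype.card_fin]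
  intro t t' h
  funext i
  have h1 : ((a + (t i : ℕ) : ℕ) : ZMod n) = ((a + (t' i : ℕ) : ℕ) : ZMod n) := congrFun h i
  have h2 : a + (t i : ℕ) < n := by have := (t i).is_lt; omega
  have h3 : a + (t' i : ℕ) < n := by have := (t' i).is_lt; omega
  have := congrArg ZMod.val h1
  rw [ZMod.val_cast_of_lt h2, ZMod.val_cast_of_lt h3] at this
  exact Fin.ext (by omega)

open Classical in
lemma sum_indicator_box (a b : ℕ) (hab : a ≤ b) (hb : b < n) (y : Fin d → ZMod n) :
    ∑ x : Fin d → ZMod n, (if y - x ∈ box d n a b then (1 : ℝ) else 0)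
      = ((b + 1 - a) ^ d : ℕ) := by
  classical
  have := Equiv.sum_comp (Equiv.subLeft y)
    (fun z : Fin d → ZMod n => if z ∈ box d n a b then (1 : ℝ) else 0)
  simp only [Equiv.subLeft_apply] at this
  rw [this, Finset.sum_boole, card_box_filter a b hab hb]

lemma ginner_eq_pair (A : Fin m × Fin d → Fin m × Fin d → ℝ) (X Y : Fin m → Fin d → ℝ) :
    ginner (appA A X) Y
      = ∑ q : Fin m × Fin d, ∑ p : Fin m × Fin d, A q p * X p.1 p.2 * Y q.1 q.2 := by
  simp only [ginner, appA, Finset.sum_mul, Fintype.sum_prod_type]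

lemma ginnerA_symm {A : Fin m × Fin d → Fin m × Fin d → ℝ} (hAsym : ∀ p q, A p q = A q p)
    (F G : Fin m → Fin d → ℝ) : ginner (appA A F) G = ginner (appA A G) F := by
  rw [ginner_eq_pair, ginner_eq_pair, Finset.sum_comm]
  refine Finset.sum_congr rfl fun p _ => Finset.sum_congr rfl fun q _ => ?_
  rw [hAsym q p]; ring

lemma ginner_self_nonneg {F : Fin m → Fin d → ℝ} : 0 ≤ ginner F F :=
  Finset.sum_nonneg fun r _ => Finset.sum_nonneg fun j _ => mul_self_nonneg _

lemma ginner_self_eq_zero {F : Fin m → Fin d → ℝ} (h : ginner F F = 0) : F = 0 := by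
  have h1 := (Finset.sum_eq_zero_iff_of_nonneg
    (fun r _ => Finset.sum_nonneg fun j _ => mul_self_nonneg (F r j))).1 h
  funext r j
  exact mul_self_eq_zero.1 ((Finset.sum_eq_zero_iff_of_nonneg
    (fun j _ => mul_self_nonneg (F r j))).1 (h1 r (Finset.mem_univ r)) j (Finset.mem_univ j))

lemma ginnerA_self_nonneg {A : Fin m × Fin d → Fin m × Fin d → ℝ} {c0 : ℝ} (hc0 : 0 < c0)
    (hApos : ∀ F : Fin m → Fin d → ℝ, c0 * ginner F F ≤ ginner (appA A F) F)
    (F : Fin m → Fin d → ℝ) : 0 ≤ ginner (appA A F) F :=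
  le_trans (mul_nonneg hc0.le ginner_self_nonneg) (hApos F)

lemma ginnerA_self_eq_zero {A : Fin m × Fin d → Fin m × Fin d → ℝ} {c0 : ℝ} (hc0 : 0 < c0)
    (hApos : ∀ F : Fin m → Fin d → ℝ, c0 * ginner F F ≤ ginner (appA A F) F)
    {F : Fin m → Fin d → ℝ} (h : ginner (appA A F) F = 0) : F = 0 := by
  apply ginner_self_eq_zero
  have h1 : c0 * ginner F F ≤ 0 := h ▸ hApos F
  nlinarith [ginner_self_nonneg (F := F)]

/-- weighted quadratic form on gradient fields -/
def QA (n : ℕ) [NeZero n] {d m : ℕ} (A : Fin m × Fin d → Fin m × Fin d → ℝ)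
    (w : (Fin d → ZMod n) → ℝ) (F G : (Fin d → ZMod n) → Fin m → Fin d → ℝ) : ℝ :=
  ∑ y, w y * ginner (appA A (F y)) (G y)

lemma QA_nonneg {A : Fin m × Fin d → Fin m × Fin d → ℝ} {c0 : ℝ} (hc0 : 0 < c0)
    (hApos : ∀ F : Fin m → Fin d → ℝ, c0 * ginner F F ≤ ginner (appA A F) F)
    {w : (Fin d → ZMod n) → ℝ} (hw : ∀ y, 0 ≤ w y)
    (F : (Fin d → ZMod n) → Fin m → Fin d → ℝ) : 0 ≤ QA n A w F F :=
  Finset.sum_nonneg fun y _ => mul_nonneg (hw y) (ginnerA_self_nonneg hc0 hApos _)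

lemma QA_self_zero {A : Fin m × Fin d → Fin m × Fin d → ℝ} {c0 : ℝ} (hc0 : 0 < c0)
    (hApos : ∀ F : Fin m → Fin d → ℝ, c0 * ginner F F ≤ ginner (appA A F) F)
    {w : (Fin d → ZMod n) → ℝ} (hw : ∀ y, 0 ≤ w y)
    {F : (Fin d → ZMod n) → Fin m → Fin d → ℝ} (h : QA n A w F F = 0) :
    ∀ y, 0 < w y → F y = 0 := by
  intro y hy
  have hterm := (Finset.sum_eq_zero_iff_of_nonneg
    (fun y _ => mul_nonneg (hw y) (ginnerA_self_nonneg hc0 hApos (F y)))).1 h y (Finset.mem_univ y)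
  have : ginner (appA A (F y)) (F y) = 0 := by
    rcases mul_eq_zero.1 hterm with h' | h'
    · exact absurd h' (ne_of_gt hy)
    · exact h'
  exact ginnerA_self_eq_zero hc0 hApos this

lemma ginner_sub_left {F F' G : Fin m → Fin d → ℝ} :
    ginner (F - F') G = ginner F G - ginner F' G := by
  simp only [ginner, Pi.sub_apply, sub_mul, Finset.sum_sub_distrib]

lemma ginner_sub_right {F G G' : Fin m → Fin d → ℝ} :
    ginner F (G - G') = ginner F G - ginner F G' := by
  simp only [ginner, Pi.sub_apply, mul_sub, Finset.sum_sub_distrib]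

lemma ginner_sub_expand {A : Fin m × Fin d → Fin m × Fin d → ℝ} (hAsym : ∀ p q, A p q = A q p)
    (F G : Fin m → Fin d → ℝ) :
    ginner (appA A (G - F)) (G - F)
      = ginner (appA A G) G - 2 * ginner (appA A F) G + ginner (appA A F) F := by
  have h1 : appA A (G - F) = appA A G - appA A F := by
    funext r j
    simp only [appA, Pi.sub_apply, mul_sub, Finset.sum_sub_distrib]
  rw [h1, ginner_sub_left, ginner_sub_right, ginner_sub_right, ginnerA_symm hAsym G F]
  ring

lemma QA_sub_expand {A : Fin m × Fin d → Fin m × Fin d → ℝ} (hAsym : ∀ p q, A p q = A q p)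
    (w : (Fin d → ZMod n) → ℝ) (F G : (Fin d → ZMod n) → Fin m → Fin d → ℝ) :
    QA n A w (fun y => G y - F y) (fun y => G y - F y)
      = QA n A w G G - 2 * QA n A w F G + QA n A w F F := by
  have step : ∀ y : Fin d → ZMod n, w y * ginner (appA A (G y - F y)) (G y - F y)
      = w y * ginner (appA A (G y)) (G y) - 2 * (w y * ginner (appA A (F y)) (G y))
        + w y * ginner (appA A (F y)) (F y) := by
    intro y
    rw [ginner_sub_expand hAsym]
    ring
  calc QA n A w (fun y => G y - F y) (fun y => G y - F y)
      = ∑ y, (w y * ginner (appA A (G y)) (G y) - 2 * (w y * ginner (appA A (F y)) (G y))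
          + w y * ginner (appA A (F y)) (F y)) := Finset.sum_congr rfl fun y _ => step y
    _ = QA n A w G G - 2 * QA n A w F G + QA n A w F F := by
        rw [Finset.sum_add_distrib, Finset.sum_sub_distrib, ← Finset.mul_sum]
        rfl

lemma dGrad_add (φ ψ : (Fin d → ZMod n) → Fin m → ℝ) (x : Fin d → ZMod n) :
    dGrad n (φ + ψ) x = dGrad n φ x + dGrad n ψ x := by
  funext r j; simp only [dGrad, Pi.add_apply]; ring

lemma dGrad_smul (c : ℝ) (φ : (Fin d → ZMod n) → Fin m → ℝ) (x : Fin d → ZMod n) :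
    dGrad n (c • φ) x = c • dGrad n φ x := by
  funext r j; simp only [dGrad, Pi.smul_apply, smul_eq_mul]; ring

lemma dGrad_zero (x : Fin d → ZMod n) :
    dGrad n (0 : (Fin d → ZMod n) → Fin m → ℝ) x = 0 := by
  funext r j; simp [dGrad]

variable {A : Fin m × Fin d → Fin m × Fin d → ℝ}

lemma appA_add (F G : Fin m → Fin d → ℝ) : appA A (F + G) = appA A F + appA A G := by
  funext r j; simp only [appA, Pi.add_apply, mul_add, Finset.sum_add_distrib]

lemma appA_smul (c : ℝ) (F : Fin m → Fin d → ℝ) : appA A (c • F) = c • appA A F := by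
  funext r j
  simp only [appA, Pi.smul_apply, smul_eq_mul, Finset.mul_sum]
  exact Finset.sum_congr rfl fun p _ => by ring

lemma appA_zero : appA A (0 : Fin m → Fin d → ℝ) = 0 := by funext r j; simp [appA]

lemma ginner_add_left {F F' G : Fin m → Fin d → ℝ} :
    ginner (F + F') G = ginner F G + ginner F' G := by
  simp only [ginner, Pi.add_apply, add_mul, Finset.sum_add_distrib]

lemma ginner_smul_left {c : ℝ} {F G : Fin m → Fin d → ℝ} :
    ginner (c • F) G = c * ginner F G := by
  simp only [ginner, Pi.smul_apply, smul_eq_mul, Finset.mul_sum]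
  exact Finset.sum_congr rfl fun r _ => Finset.sum_congr rfl fun j _ => by ring

lemma ginner_zero_left {G : Fin m → Fin d → ℝ} : ginner 0 G = 0 := by simp [ginner]

lemma plusForm_add_left (φ φ' ψ : (Fin d → ZMod n) → Fin m → ℝ) :
    plusForm n A (φ + φ') ψ = plusForm n A φ ψ + plusForm n A φ' ψ := by
  simp only [plusForm, dGrad_add, appA_add, ginner_add_left, Finset.sum_add_distrib]

lemma plusForm_smul_left (c : ℝ) (φ ψ : (Fin d → ZMod n) → Fin m → ℝ) :
    plusForm n A (c • φ) ψ = c * plusForm n A φ ψ := by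
  simp only [plusForm, dGrad_smul, appA_smul, ginner_smul_left, Finset.mul_sum]

lemma plusForm_zero_left (ψ : (Fin d → ZMod n) → Fin m → ℝ) :
    plusForm n A (0 : (Fin d → ZMod n) → Fin m → ℝ) ψ = 0 := by
  simp only [plusForm, dGrad_zero, appA_zero, ginner_zero_left, Finset.sum_const_zero]

lemma plusForm_sum_left {ι : Type*} (s : Finset ι) (F : ι → (Fin d → ZMod n) → Fin m → ℝ)
    (ψ : (Fin d → ZMod n) → Fin m → ℝ) :
    plusForm n A (∑ i ∈ s, F i) ψ = ∑ i ∈ s, plusForm n A (F i) ψ := by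
  induction s using Finset.cons_induction with
  | empty => simp only [Finset.sum_empty]; exact plusForm_zero_left ψ
  | cons a s ha ih =>
    rw [Finset.sum_cons, Finset.sum_cons, plusForm_add_left, ih]

lemma plusForm_comm (hAsym : ∀ p q, A p q = A q p) (φ ψ : (Fin d → ZMod n) → Fin m → ℝ) :
    plusForm n A φ ψ = plusForm n A ψ φ :=
  Finset.sum_congr rfl fun y _ => ginnerA_symm hAsym _ _

lemma sum3_comm (f : (Fin d → ZMod n) → Fin m → Fin d → ℝ) :
    ∑ y, ∑ r, ∑ j, f y r j = ∑ j, ∑ y, ∑ r, f y r j :=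
  calc ∑ y, ∑ r, ∑ j, f y r j
      = ∑ y, ∑ j, ∑ r, f y r j := Finset.sum_congr rfl fun _ _ => Finset.sum_comm
    _ = ∑ j, ∑ y, ∑ r, f y r j := Finset.sum_comm

lemma shift_sum (j : Fin d) (g : (Fin d → ZMod n) → ℝ) :
    ∑ y, g (y + unitVec d n j) = ∑ y, g y :=
  Equiv.sum_comp (Equiv.addRight (unitVec d n j)) g

lemma sbp_gen (G : (Fin d → ZMod n) → Fin m → Fin d → ℝ) (χ : (Fin d → ZMod n) → Fin m → ℝ) :
    ∑ y, ginner (G y) (dGrad n χ y)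
      = ∑ y, ∑ r, χ y r * (∑ j, (G (y - unitVec d n j) r j - G y r j)) := by
  have lhs : ∑ y, ginner (G y) (dGrad n χ y)
      = ∑ y, ∑ r, ∑ j, G y r j * χ (y + unitVec d n j) r
        - ∑ y, ∑ r, ∑ j, G y r j * χ y r := by
    simp only [ginner, dGrad, mul_sub, Finset.sum_sub_distrib]
  have rhs : ∑ y, ∑ r, χ y r * (∑ j, (G (y - unitVec d n j) r j - G y r j))
      = ∑ y, ∑ r, ∑ j, G (y - unitVec d n j) r j * χ y r
        - ∑ y, ∑ r, ∑ j, G y r j * χ y r := by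
    simp only [Finset.mul_sum, mul_sub, Finset.sum_sub_distrib]
    congr 1 <;>
      exact Finset.sum_congr rfl fun y _ => Finset.sum_congr rfl fun r _ =>
        Finset.sum_congr rfl fun j _ => by ring
  rw [lhs, rhs]
  congr 1
  rw [sum3_comm, sum3_comm (f := fun y r j => G (y - unitVec d n j) r j * χ y r)]
  refine Finset.sum_congr rfl fun j _ => ?_
  have := shift_sum j (fun y => ∑ r, G (y - unitVec d n j) r j * χ y r)
  rw [← this]
  refine Finset.sum_congr rfl fun y _ => Finset.sum_congr rfl fun r _ => ?_
  rw [add_sub_cancel_right]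

/-- summation by parts -/
lemma sbp (A : Fin m × Fin d → Fin m × Fin d → ℝ) (φ χ : (Fin d → ZMod n) → Fin m → ℝ) :
    plusForm n A φ χ = ∑ y, ∑ r, χ y r * opA n A φ y r :=
  sbp_gen (fun y => appA A (dGrad n φ y)) χ

lemma sum_opA_eq_zero (A : Fin m × Fin d → Fin m × Fin d → ℝ)
    (φ : (Fin d → ZMod n) → Fin m → ℝ) (r : Fin m) :
    ∑ y, opA n A φ y r = 0 := by
  have h1 : ∀ j : Fin d, ∑ y, appA A (dGrad n φ (y - unitVec d n j)) r j
      = ∑ y, appA A (dGrad n φ y) r j := fun j =>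
    Equiv.sum_comp (Equiv.subRight (unitVec d n j)) (fun y => appA A (dGrad n φ y) r j)
  calc ∑ y, opA n A φ y r
      = ∑ j, ∑ y, (appA A (dGrad n φ (y - unitVec d n j)) r j - appA A (dGrad n φ y) r j) :=
        Finset.sum_comm
    _ = 0 := Finset.sum_eq_zero fun j _ => by
        rw [Finset.sum_sub_distrib, h1 j, sub_self]

end Aux34


section Aux34b

set_option linter.unusedSectionVars false

variable {d m : ℕ} {n : ℕ} [NeZero n]

lemma box_mono {l : ℕ} {z : Fin d → ZMod n} (h : z ∈ box d n 1 (l - 1)) :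
    z ∈ box d n 0 (l - 1) := fun i => by
  obtain ⟨k, hk1, hk2, hk3⟩ := h i
  exact ⟨k, Nat.zero_le _, hk2, hk3⟩

lemma shift_mem_box {l : ℕ} {y x : Fin d → ZMod n} {j : Fin d}
    (h : (y + unitVec d n j) - x ∈ box d n 1 (l - 1)) :
    y - x ∈ box d n 0 (l - 1) := by
  intro i
  obtain ⟨k, hk1, hk2, hk3⟩ := h i
  have hyx : (y + unitVec d n j - x) i = (y - x) i + unitVec d n j i := by
    simp only [Pi.add_apply, Pi.sub_apply]; ring
  by_cases hij : i = j
  · subst hij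
    have hone : unitVec d n i i = 1 := by simp [unitVec]
    rw [hyx, hone] at hk3
    refine ⟨k - 1, Nat.zero_le _, by omega, ?_⟩
    have hk : k = (k - 1) + 1 := by omega
    rw [hk, Nat.cast_add, Nat.cast_one] at hk3
    exact add_right_cancel hk3
  · have hzero : unitVec d n j i = 0 := by simp [unitVec, hij]
    rw [hyx, hzero, add_zero] at hk3
    exact ⟨k, Nat.zero_le _, hk2, hk3⟩

lemma zero_not_in_box1 {l : ℕ} (hd : 1 ≤ d) (hln : l - 1 < n) :
    (0 : Fin d → ZMod n) ∉ box d n 1 (l - 1) := by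
  intro h
  obtain ⟨k, hk1, hk2, hk3⟩ := h ⟨0, hd⟩
  have : ((k : ZMod n)).val = k := ZMod.val_cast_of_lt (by omega)
  rw [← hk3] at this
  simp only [Pi.zero_apply, ZMod.val_zero] at this
  omega

lemma dGrad_zero_outside {l : ℕ} {ψ : (Fin d → ZMod n) → Fin m → ℝ} {x : Fin d → ZMod n}
    (hsupp : ∀ y, y - x ∉ box d n 1 (l - 1) → ψ y = 0) :
    ∀ y, y - x ∉ box d n 0 (l - 1) → dGrad n ψ y = 0 := by
  intro y hy
  funext r j
  have h1 : ψ y = 0 := hsupp y (fun hmem => hy (box_mono hmem))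
  have h2 : ψ (y + unitVec d n j) = 0 :=
    hsupp _ (fun hmem => hy (shift_mem_box hmem))
  simp [dGrad, h1, h2]

lemma meanzero_const_eq_zero {φ : (Fin d → ZMod n) → Fin m → ℝ} (hφ : MeanZero n φ)
    (hconst : ∀ z y, φ z = φ y) : φ = 0 := by
  funext z r
  have h1 : ∑ x : Fin d → ZMod n, φ x r = 0 := by
    have := congrFun hφ r
    rw [Finset.sum_apply] at this
    simpa using this
  have h2 : ∑ x : Fin d → ZMod n, φ x r
      = (Fintype.card (Fin d → ZMod n) : ℝ) * φ z r := by
    calc ∑ x : Fin d → ZMod n, φ x r = ∑ _x : Fin d → ZMod n, φ z r :=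
          Finset.sum_congr rfl fun y _ => by rw [hconst y z]
      _ = (Fintype.card (Fin d → ZMod n) : ℝ) * φ z r := by
          rw [Finset.sum_const, Finset.card_univ, nsmul_eq_mul]
  have hcard : 0 < (Fintype.card (Fin d → ZMod n) : ℝ) := by
    exact_mod_cast Fintype.card_pos
  have := h2.symm.trans h1
  simp only [Pi.zero_apply]
  rcases mul_eq_zero.1 this with h | h
  · exact absurd h (ne_of_gt hcard)
  · exact h

lemma eq_zero_of_plusForm_self {A : Fin m × Fin d → Fin m × Fin d → ℝ} {c0 : ℝ} (hc0 : 0 < c0)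
    (hApos : ∀ F : Fin m → Fin d → ℝ, c0 * ginner F F ≤ ginner (appA A F) F)
    {φ : (Fin d → ZMod n) → Fin m → ℝ} (hφ : MeanZero n φ)
    (h : plusForm n A φ φ = 0) : φ = 0 := by
  have hterm : ∀ y : Fin d → ZMod n, ginner (appA A (dGrad n φ y)) (dGrad n φ y) = 0 := by
    intro y
    exact (Finset.sum_eq_zero_iff_of_nonneg
      (fun y _ => ginnerA_self_nonneg hc0 hApos (dGrad n φ y))).1 h y (Finset.mem_univ y)
  have hgrad : ∀ y : Fin d → ZMod n, dGrad n φ y = 0 := fun y =>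
    ginnerA_self_eq_zero hc0 hApos (hterm y)
  have hstep : ∀ (y : Fin d → ZMod n) (i : Fin d), φ (y + unitVec d n i) = φ y := by
    intro y i
    funext s
    have := congrFun (congrFun (hgrad y) s) i
    simp only [dGrad, Pi.zero_apply] at this
    linarith
  exact meanzero_const_eq_zero hφ (fun z y => const_of_unit_steps φ hstep y z)

open Classical in
lemma sum_indicator_box' (a b : ℕ) (hab : a ≤ b) (hb : b < n) (y : Fin d → ZMod n) :
    ∑ z : Fin d → ZMod n, (if z - y ∈ box d n a b then (1 : ℝ) else 0)
      = ((b + 1 - a) ^ d : ℕ) := by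
  classical
  have := Equiv.sum_comp (Equiv.subRight y)
    (fun u : Fin d → ZMod n => if u ∈ box d n a b then (1 : ℝ) else 0)
  simp only [Equiv.subRight_apply] at this
  rw [this, Finset.sum_boole, card_box_filter a b hab hb]

open Classical in
lemma phi_eq_zero_of_localavg {l : ℕ} (hl : 3 ≤ l) (hln : l - 1 < n)
    {φ : (Fin d → ZMod n) → Fin m → ℝ} (hφ : MeanZero n φ)
    (havg : ∀ (x : Fin d → ZMod n) (r : Fin m),
      ∑ z, (if z - x ∈ box d n 1 (l - 1) then φ z r else 0) = ((l - 1) ^ d : ℕ) * φ x r) :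
    φ = 0 := by
  classical
  funext z0 r
  obtain ⟨x0, _, hmax⟩ := Finset.exists_max_image (Finset.univ : Finset (Fin d → ZMod n))
    (fun z => φ z r) ⟨z0, Finset.mem_univ z0⟩
  set M := φ x0 r with hM
  have hmax' : ∀ z : Fin d → ZMod n, φ z r ≤ M := fun z => hmax z (Finset.mem_univ z)
  have hindsum : ∀ y : Fin d → ZMod n,
      ∑ z, (if z - y ∈ box d n 1 (l - 1) then (1:ℝ) else 0) = ((l - 1) ^ d : ℕ) := by
    intro y
    have h2 := sum_indicator_box' (n := n) (d := d) 1 (l - 1) (by omega) hln y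
    have h3 : (l - 1 + 1 - 1) = l - 1 := by omega
    rw [h3] at h2
    exact h2
  -- step property for jumps with coordinates in {1,2}
  have hstep : ∀ y (c : Fin d → ℕ), (∀ i, 1 ≤ c i ∧ c i ≤ 2) → φ y r = M →
      φ (y + natv d n c) r = M := by
    intro y c hc hy
    have h1 := havg y r
    have h2 : ∑ z, (if z - y ∈ box d n 1 (l - 1) then (M : ℝ) else 0)
        = ((l - 1) ^ d : ℕ) * M := by
      have : ∀ z : Fin d → ZMod n, (if z - y ∈ box d n 1 (l - 1) then (M : ℝ) else 0)
          = (if z - y ∈ box d n 1 (l - 1) then (1:ℝ) else 0) * M := by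
        intro z; split <;> simp
      rw [Finset.sum_congr rfl fun z _ => this z, ← Finset.sum_mul, hindsum y]
    have h3 : ∑ z, (if z - y ∈ box d n 1 (l - 1) then (M - φ z r) else 0) = 0 := by
      have hsplit : ∀ z : Fin d → ZMod n,
          (if z - y ∈ box d n 1 (l - 1) then (M - φ z r) else 0)
            = (if z - y ∈ box d n 1 (l - 1) then (M : ℝ) else 0)
              - (if z - y ∈ box d n 1 (l - 1) then φ z r else 0) := by
        intro z; split <;> simp
      rw [Finset.sum_congr rfl fun z _ => hsplit z, Finset.sum_sub_distrib, h1, h2, hy, sub_self]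
    have hnn : ∀ z ∈ (Finset.univ : Finset (Fin d → ZMod n)),
        0 ≤ (if z - y ∈ box d n 1 (l - 1) then (M - φ z r) else 0) := by
      intro z _
      split
      · have := hmax' z; linarith
      · exact le_refl 0
    have hall := (Finset.sum_eq_zero_iff_of_nonneg hnn).1 h3
    have hmem : (y + natv d n c) - y ∈ box d n 1 (l - 1) := by
      rw [add_sub_cancel_left]
      intro i
      exact ⟨c i, (hc i).1, by have := (hc i).2; omega, rfl⟩
    have := hall (y + natv d n c) (Finset.mem_univ _)
    rw [if_pos hmem] at this
    linarith
  have hallM : ∀ z, φ z r = M :=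
    reach12 (fun z => φ z r = M) (fun y c hc hy => hstep y c hc hy) x0 rfl
  -- mean zero forces M = 0
  have h1 : ∑ x : Fin d → ZMod n, φ x r = 0 := by
    have := congrFun hφ r
    rw [Finset.sum_apply] at this
    simpa using this
  have h2 : ∑ x : Fin d → ZMod n, φ x r = (Fintype.card (Fin d → ZMod n) : ℝ) * M := by
    rw [Finset.sum_congr rfl fun z _ => hallM z, Finset.sum_const, Finset.card_univ,
      nsmul_eq_mul]
  have hcard : 0 < (Fintype.card (Fin d → ZMod n) : ℝ) := by exact_mod_cast Fintype.card_pos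
  have hM0 : M = 0 := by
    have := h2.symm.trans h1
    rcases mul_eq_zero.1 this with h | h
    · exact absurd h (ne_of_gt hcard)
    · exact h
  simp only [Pi.zero_apply]
  rw [hallM z0, hM0]

end Aux34b
lemma main_core {d m : ℕ} (n : ℕ) [NeZero n] (hd : 1 ≤ d) (l : ℕ) (hl : 3 ≤ l)
    (hln : l - 1 < n) (c0 : ℝ) (hc0 : 0 < c0)
    (A : Fin m × Fin d → Fin m × Fin d → ℝ)
    (hAsym : ∀ p q, A p q = A q p)
    (hApos : ∀ F : Fin m → Fin d → ℝ, c0 * ginner F F ≤ ginner (appA A F) F)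
    (Pix : (Fin d → ZMod n) →
      ((Fin d → ZMod n) → Fin m → ℝ) → (Fin d → ZMod n) → Fin m → ℝ)
    (hPix : ∀ x, IsProj n A l x (Pix x))
    (φ : (Fin d → ZMod n) → Fin m → ℝ) (hφ : MeanZero n φ) :
    (0 ≤ plusForm n A (Tavg n l Pix φ) φ ∧
      plusForm n A (Tavg n l Pix φ) φ ≤ plusForm n A φ φ) ∧
    (φ ≠ 0 →
      0 < plusForm n A (Tavg n l Pix φ) φ ∧
      plusForm n A (Tavg n l Pix φ) φ < plusForm n A φ φ) := by
  classical
  have hn3 : 3 ≤ n := by omega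
  -- projection properties
  have hPP : ∀ x : Fin d → ZMod n, MeanZero n (Pix x φ) ∧
      (∀ y, y - x ∉ box d n 1 (l - 1) → Pix x φ y = 0) ∧
      ∀ ψ, MeanZero n ψ → (∀ y, y - x ∉ box d n 1 (l - 1) → ψ y = 0) →
        plusForm n A (Pix x φ) ψ = plusForm n A φ ψ := fun x => hPix x φ hφ
  have hproj_self : ∀ x, plusForm n A (Pix x φ) φ = plusForm n A (Pix x φ) (Pix x φ) := by
    intro x
    obtain ⟨hmz, hsupp, hproj⟩ := hPP x
    rw [plusForm_comm hAsym (Pix x φ) φ]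
    exact (hproj (Pix x φ) hmz hsupp).symm
  have hself_nonneg : ∀ x, 0 ≤ plusForm n A (Pix x φ) (Pix x φ) := fun x =>
    Finset.sum_nonneg fun y _ => ginnerA_self_nonneg hc0 hApos _
  set S := ∑ x, plusForm n A (Pix x φ) (Pix x φ) with hS
  have hSnn : 0 ≤ S := Finset.sum_nonneg fun x _ => hself_nonneg x
  have hTS : plusForm n A (Tavg n l Pix φ) φ = ((l : ℝ) ^ d)⁻¹ * S := by
    have h1 : plusForm n A (Tavg n l Pix φ) φ
        = ((l : ℝ) ^ d)⁻¹ * ∑ x, plusForm n A (Pix x φ) φ := by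
      simp only [Tavg]
      rw [plusForm_smul_left, plusForm_sum_left]
    rw [h1, hS]
    congr 1
    exact Finset.sum_congr rfl fun x _ => hproj_self x
  have hlpos : (0 : ℝ) < (l : ℝ) ^ d := by
    have : (0:ℝ) < (l:ℝ) := by exact_mod_cast (by omega : 0 < l)
    positivity
  have hcinv : (0 : ℝ) < ((l : ℝ) ^ d)⁻¹ := inv_pos.2 hlpos
  -- the weights
  set w : (Fin d → ZMod n) → (Fin d → ZMod n) → ℝ :=
    fun x y => if y - x ∈ box d n 0 (l - 1) then (1 : ℝ) else 0 with hw
  have hwnn : ∀ x y, 0 ≤ w x y := by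
    intro x y; rw [hw]; dsimp only; split <;> norm_num
  -- identification of plusForm with weighted QA for localized first argument
  have hBQ : ∀ (x : Fin d → ZMod n) (χ : (Fin d → ZMod n) → Fin m → ℝ),
      plusForm n A (Pix x φ) χ = QA n A (w x) (dGrad n (Pix x φ)) (dGrad n χ) := by
    intro x χ
    simp only [plusForm, QA]
    refine Finset.sum_congr rfl fun y _ => ?_
    by_cases hy : y - x ∈ box d n 0 (l - 1)
    · rw [hw]; dsimp only; rw [if_pos hy, one_mul]
    · have h0 : dGrad n (Pix x φ) y = 0 := dGrad_zero_outside (hPP x).2.1 y hy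
      rw [h0, appA_zero, ginner_zero_left, hw]; dsimp only; rw [if_neg hy, zero_mul]
  have hQeq : ∀ x, QA n A (w x) (dGrad n (Pix x φ)) (dGrad n (Pix x φ))
      = QA n A (w x) (dGrad n (Pix x φ)) (dGrad n φ) := by
    intro x
    rw [← hBQ x (Pix x φ), ← hBQ x φ, ← hproj_self x]
  have hBE : ∀ x, plusForm n A (Pix x φ) (Pix x φ)
      ≤ QA n A (w x) (dGrad n φ) (dGrad n φ) := by
    intro x
    have hdiff : 0 ≤ QA n A (w x) (fun y => dGrad n φ y - dGrad n (Pix x φ) y)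
        (fun y => dGrad n φ y - dGrad n (Pix x φ) y) :=
      QA_nonneg hc0 hApos (hwnn x) _
    rw [QA_sub_expand hAsym] at hdiff
    have h1 := hQeq x
    have h2 := hBQ x (Pix x φ)
    linarith
  -- total weight count
  have hEsum : ∑ x, QA n A (w x) (dGrad n φ) (dGrad n φ) = (l : ℝ) ^ d * plusForm n A φ φ := by
    have hcount : ∀ y : Fin d → ZMod n, ∑ x, w x y = (l : ℝ) ^ d := by
      intro y
      have h1 := sum_indicator_box (n := n) (d := d) 0 (l - 1) (Nat.zero_le _) hln y
      have h2 : l - 1 + 1 - 0 = l := by omega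
      rw [h2] at h1
      rw [hw]; dsimp only
      rw [h1]; push_cast; ring
    calc ∑ x, QA n A (w x) (dGrad n φ) (dGrad n φ)
        = ∑ x, ∑ y, w x y * ginner (appA A (dGrad n φ y)) (dGrad n φ y) := rfl
      _ = ∑ y, ∑ x, w x y * ginner (appA A (dGrad n φ y)) (dGrad n φ y) := Finset.sum_comm
      _ = ∑ y, (∑ x, w x y) * ginner (appA A (dGrad n φ y)) (dGrad n φ y) := by
          exact Finset.sum_congr rfl fun y _ => (Finset.sum_mul _ _ _).symm
      _ = ∑ y, (l : ℝ) ^ d * ginner (appA A (dGrad n φ y)) (dGrad n φ y) := by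
          exact Finset.sum_congr rfl fun y _ => by rw [hcount y]
      _ = (l : ℝ) ^ d * ∑ y, ginner (appA A (dGrad n φ y)) (dGrad n φ y) := by
          rw [Finset.mul_sum]
      _ = (l : ℝ) ^ d * plusForm n A φ φ := rfl
  have hSE : S ≤ (l : ℝ) ^ d * plusForm n A φ φ := by
    have h1 : S ≤ ∑ x, QA n A (w x) (dGrad n φ) (dGrad n φ) :=
      Finset.sum_le_sum fun x _ => hBE x
    linarith
  have hupper : plusForm n A (Tavg n l Pix φ) φ ≤ plusForm n A φ φ := by
    rw [hTS]
    calc ((l : ℝ) ^ d)⁻¹ * S ≤ ((l : ℝ) ^ d)⁻¹ * ((l : ℝ) ^ d * plusForm n A φ φ) :=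
          mul_le_mul_of_nonneg_left hSE hcinv.le
      _ = plusForm n A φ φ := by
          rw [← mul_assoc, inv_mul_cancel₀ (ne_of_gt hlpos), one_mul]
  refine ⟨⟨by rw [hTS]; exact mul_nonneg hcinv.le hSnn, hupper⟩, ?_⟩
  intro hφ0
  constructor
  · -- strict lower bound
    rw [hTS]
    apply mul_pos hcinv
    rcases lt_or_eq_of_le hSnn with h | h
    · exact h
    have hS0 : S = 0 := h.symm
    exfalso
    -- all local projections vanish
    have hzero : ∀ x, plusForm n A (Pix x φ) (Pix x φ) = 0 := fun x =>
      (Finset.sum_eq_zero_iff_of_nonneg (fun x _ => hself_nonneg x)).1 hS0 x (Finset.mem_univ x)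
    have hgradzero : ∀ x y, dGrad n (Pix x φ) y = 0 := by
      intro x y
      have hterm := (Finset.sum_eq_zero_iff_of_nonneg
        (fun y _ => ginnerA_self_nonneg hc0 hApos (dGrad n (Pix x φ) y))).1 (hzero x) y
        (Finset.mem_univ y)
      exact ginnerA_self_eq_zero hc0 hApos hterm
    have hPzero : ∀ (x : Fin d → ZMod n) (χ : (Fin d → ZMod n) → Fin m → ℝ),
        plusForm n A (Pix x φ) χ = 0 := by
      intro x χ
      refine Finset.sum_eq_zero fun y _ => ?_
      rw [hgradzero x y, appA_zero, ginner_zero_left]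
    -- the elliptic operator applied to φ is constant in each direction
    have hone_lt : 1 < n := by omega
    have hDstep : ∀ (y : Fin d → ZMod n) (j : Fin d) (r : Fin m),
        opA n A φ y r = opA n A φ (y + unitVec d n j) r := by
      intro y j r
      set x : Fin d → ZMod n := y - natv d n (fun _ => 1) with hx
      set y' : Fin d → ZMod n := y + unitVec d n j with hy'
      have hyne : y' ≠ y := by
        rw [hy']
        intro h
        have h1 : unitVec d n j j = 0 := by
          have h2 := congrFun h j
          simp only [Pi.add_apply] at h2
          exact left_eq_add.mp h2.symm
        rw [unitVec, if_pos rfl] at h1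
        have := congrArg ZMod.val h1
        rw [ZMod.val_zero] at this
        have hv1 : (1 : ZMod n).val = 1 := by
          rw [← Nat.cast_one]; exact ZMod.val_cast_of_lt hone_lt
        omega
      have hymem : y - x ∈ box d n 1 (l - 1) := by
        rw [hx, sub_sub_cancel]
        intro i
        exact ⟨1, le_refl 1, by omega, rfl⟩
      have hy'mem : y' - x ∈ box d n 1 (l - 1) := by
        have hexp : y' - x = natv d n (fun i => if i = j then 2 else 1) := by
          rw [hy', hx]
          funext i
          simp only [Pi.add_apply, Pi.sub_apply, natv, unitVec]
          by_cases hij : i = j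
          · rw [if_pos hij, if_pos hij]; push_cast; ring
          · rw [if_neg hij, if_neg hij]; push_cast; ring
        rw [hexp]
        intro i
        by_cases hij : i = j
        · exact ⟨2, by omega, by omega, by simp [natv, hij]⟩
        · exact ⟨1, le_refl 1, by omega, by simp [natv, hij]⟩
      set χ : (Fin d → ZMod n) → Fin m → ℝ := fun z s =>
        (if z = y then (if s = r then (1 : ℝ) else 0) else 0)
          - (if z = y' then (if s = r then (1 : ℝ) else 0) else 0) with hχ
      have hχmz : MeanZero n χ := by
        funext s
        rw [Finset.sum_apply]
        simp only [hχ, Finset.sum_sub_distrib, Pi.zero_apply]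
        rw [Finset.sum_ite_eq' Finset.univ y (fun _ => if s = r then (1:ℝ) else 0),
          Finset.sum_ite_eq' Finset.univ y' (fun _ => if s = r then (1:ℝ) else 0)]
        simp
      have hχsupp : ∀ z, z - x ∉ box d n 1 (l - 1) → χ z = 0 := by
        intro z hz
        have hzy : z ≠ y := by rintro rfl; exact hz hymem
        have hzy' : z ≠ y' := by rintro rfl; exact hz hy'mem
        funext s
        simp only [hχ, if_neg hzy, if_neg hzy', sub_zero, Pi.zero_apply]
      have hkey : plusForm n A φ χ = 0 := by
        rw [← (hPP x).2.2 χ hχmz hχsupp, hPzero x χ]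
      have hcomp : plusForm n A φ χ = opA n A φ y r - opA n A φ y' r := by
        rw [sbp A φ χ]
        have hterm : ∀ z : Fin d → ZMod n, ∑ s, χ z s * opA n A φ z s
            = (if z = y then opA n A φ y r else 0) - (if z = y' then opA n A φ y' r else 0) := by
          intro z
          simp only [hχ, sub_mul, ite_mul, one_mul, zero_mul, Finset.sum_sub_distrib]
          congr 1
          · by_cases hzy : z = y
            · subst hzy
              simp [Finset.sum_ite_eq']
            · simp [hzy]
          · by_cases hzy : z = y'
            · subst hzy
              simp [Finset.sum_ite_eq']
            · simp [hzy]
        rw [Finset.sum_congr rfl fun z _ => hterm z, Finset.sum_sub_distrib]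
        simp [Finset.sum_ite_eq']
      rw [hkey] at hcomp
      linarith [hcomp]
    have hDzero : ∀ (z : Fin d → ZMod n) (r : Fin m), opA n A φ z r = 0 := by
      intro z r
      have hconst : ∀ u : Fin d → ZMod n, opA n A φ u r = opA n A φ z r := fun u =>
        const_of_unit_steps (fun v => opA n A φ v r)
          (fun v j => (hDstep v j r).symm) z u
      have hsum := sum_opA_eq_zero A φ r
      rw [Finset.sum_congr rfl fun u _ => hconst u, Finset.sum_const, Finset.card_univ,
        nsmul_eq_mul] at hsum
      have hcard : 0 < (Fintype.card (Fin d → ZMod n) : ℝ) := by exact_mod_cast Fintype.card_pos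
      rcases mul_eq_zero.1 hsum with h' | h'
      · exact absurd h' (ne_of_gt hcard)
      · exact h'
    have hBff : plusForm n A φ φ = 0 := by
      rw [sbp A φ φ]
      exact Finset.sum_eq_zero fun y _ => Finset.sum_eq_zero fun r _ => by
        rw [hDzero y r, mul_zero]
    exact hφ0 (eq_zero_of_plusForm_self hc0 hApos hφ hBff)
  · -- strict upper bound
    by_contra hcon
    push_neg at hcon
    have heq : plusForm n A (Tavg n l Pix φ) φ = plusForm n A φ φ := le_antisymm hupper hcon
    rw [hTS] at heq
    have hSeq : S = (l : ℝ) ^ d * plusForm n A φ φ := by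
      have := congrArg (fun t => (l : ℝ) ^ d * t) heq
      simp only [← mul_assoc, mul_inv_cancel₀ (ne_of_gt hlpos), one_mul] at this
      exact this
    have hsum0 : ∑ x, (QA n A (w x) (dGrad n φ) (dGrad n φ)
        - plusForm n A (Pix x φ) (Pix x φ)) = 0 := by
      rw [Finset.sum_sub_distrib, hEsum, ← hS, ← hSeq, sub_self]
    have hEeq : ∀ x, plusForm n A (Pix x φ) (Pix x φ)
        = QA n A (w x) (dGrad n φ) (dGrad n φ) := by
      intro x
      have := (Finset.sum_eq_zero_iff_of_nonneg
        (fun x _ => by have := hBE x; linarith)).1 hsum0 x (Finset.mem_univ x)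
      linarith
    have hgradeq : ∀ (x y : Fin d → ZMod n), y - x ∈ box d n 0 (l - 1) →
        dGrad n φ y = dGrad n (Pix x φ) y := by
      intro x y hy
      have hzero : QA n A (w x) (fun y => dGrad n φ y - dGrad n (Pix x φ) y)
          (fun y => dGrad n φ y - dGrad n (Pix x φ) y) = 0 := by
        rw [QA_sub_expand hAsym]
        have h1 := hQeq x
        have h2 := hBQ x (Pix x φ)
        have h3 := hEeq x
        linarith
      have hwpos : 0 < w x y := by
        rw [hw]; dsimp only; rw [if_pos hy]; norm_num
      have := QA_self_zero hc0 hApos (hwnn x) hzero y hwpos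
      exact sub_eq_zero.1 this
    -- local averaging identity
    have havg : ∀ (x : Fin d → ZMod n) (r : Fin m),
        ∑ z, (if z - x ∈ box d n 1 (l - 1) then φ z r else 0)
          = ((l - 1) ^ d : ℕ) * φ x r := by
      intro x r
      have hconst : ∀ (wv : Fin d → ℕ), (∀ i, wv i ≤ l - 1) →
          (fun z s => φ z s - Pix x φ z s) (x + natv d n wv)
            = (fun z s => φ z s - Pix x φ z s) x := by
        refine box_const (l - 1) (fun z s => φ z s - Pix x φ z s) x ?_
        intro y hy i
        funext s
        have hg := hgradeq x y hy
        have := congrFun (congrFun hg s) i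
        simp only [dGrad] at this
        linarith
      have hψx0 : Pix x φ x = 0 :=
        (hPP x).2.1 x (by rw [sub_self]; exact zero_not_in_box1 hd hln)
      have hval : ∀ z, z - x ∈ box d n 1 (l - 1) → ∀ s, Pix x φ z s = φ z s - φ x s := by
        intro z hz s
        choose k hk1 hk2 hk3 using hz
        have hzeq : z = x + natv d n k := by
          funext i
          have h1 := hk3 i
          simp only [Pi.sub_apply] at h1
          have : z i = x i + (k i : ZMod n) := by rw [← h1]; ring
          exact this
        have hc := hconst k hk2
        rw [← hzeq] at hc
        have := congrFun hc s
        dsimp only at this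
        have h0 : Pix x φ x s = 0 := by rw [hψx0]; rfl
        linarith
      have hmzr : ∑ z, Pix x φ z r = 0 := by
        have := congrFun (hPP x).1 r
        rw [Finset.sum_apply] at this
        simpa using this
      have hsplit : ∑ z, Pix x φ z r
          = ∑ z, (if z - x ∈ box d n 1 (l - 1) then (φ z r - φ x r) else 0) := by
        refine Finset.sum_congr rfl fun z _ => ?_
        by_cases hz : z - x ∈ box d n 1 (l - 1)
        · rw [if_pos hz, hval z hz r]
        · rw [if_neg hz, (hPP x).2.1 z hz]; rfl
      have hindsum : ∑ z, (if z - x ∈ box d n 1 (l - 1) then (1:ℝ) else 0)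
          = ((l - 1) ^ d : ℕ) := by
        have h2 := sum_indicator_box' (n := n) (d := d) 1 (l - 1) (by omega) hln x
        have h3 : l - 1 + 1 - 1 = l - 1 := by omega
        rw [h3] at h2
        exact h2
      have hconstsum : ∑ z, (if z - x ∈ box d n 1 (l - 1) then φ x r else 0)
          = ((l - 1) ^ d : ℕ) * φ x r := by
        have : ∀ z : Fin d → ZMod n, (if z - x ∈ box d n 1 (l - 1) then φ x r else 0)
            = (if z - x ∈ box d n 1 (l - 1) then (1:ℝ) else 0) * φ x r := by
          intro z; split <;> simp
        rw [Finset.sum_congr rfl fun z _ => this z, ← Finset.sum_mul, hindsum]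
      have hsplit2 : ∑ z, (if z - x ∈ box d n 1 (l - 1) then (φ z r - φ x r) else 0)
          = ∑ z, (if z - x ∈ box d n 1 (l - 1) then φ z r else 0)
            - ∑ z, (if z - x ∈ box d n 1 (l - 1) then φ x r else 0) := by
        rw [← Finset.sum_sub_distrib]
        refine Finset.sum_congr rfl fun z _ => ?_
        split <;> simp
      rw [hsplit, hsplit2, hconstsum] at hmzr
      linarith
    exact hφ0 (phi_eq_zero_of_localavg hl hln hφ havg)


/-- **Lemma 3.4(ii)**: `0 ≤ (𝒯φ,φ)_+ ≤ (φ,φ)_+`, with strict inequalities when `φ ≠ 0`. -/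
theorem statement9
    (d m L N l : ℕ) (hd : 1 ≤ d) (hm : 1 ≤ m) (hLodd : Odd L) (hL : 3 ≤ L) (hN : 1 ≤ N)
    [NeZero (L ^ N)] (hl : 3 ≤ l) (hlN : l - 1 < L ^ N)
    (c0 : ℝ) (hc0 : 0 < c0)
    (A : Fin m × Fin d → Fin m × Fin d → ℝ)
    (hAsym : ∀ p q, A p q = A q p)
    (hApos : ∀ F : Fin m → Fin d → ℝ, c0 * ginner F F ≤ ginner (appA A F) F)
    (Pix : (Fin d → ZMod (L ^ N)) →
      ((Fin d → ZMod (L ^ N)) → Fin m → ℝ) → (Fin d → ZMod (L ^ N)) → Fin m → ℝ)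
    (hPix : ∀ x, IsProj (L ^ N) A l x (Pix x))
    (φ : (Fin d → ZMod (L ^ N)) → Fin m → ℝ) (hφ : MeanZero (L ^ N) φ) :
    (0 ≤ plusForm (L ^ N) A (Tavg (L ^ N) l Pix φ) φ ∧
      plusForm (L ^ N) A (Tavg (L ^ N) l Pix φ) φ ≤ plusForm (L ^ N) A φ φ) ∧
    (φ ≠ 0 →
      0 < plusForm (L ^ N) A (Tavg (L ^ N) l Pix φ) φ ∧
      plusForm (L ^ N) A (Tavg (L ^ N) l Pix φ) φ < plusForm (L ^ N) A φ φ) := by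
  exact main_core (L ^ N) hd l hl hlN c0 hc0 A hAsym hApos Pix hPix φ hφ

end FRD
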